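/- arXiv:2604.05441 — 3 statements merged into one kernel-verified Lean document; each statement's English description precedes it below -/
import Mathlib

section
/- Let γ > 0, 0 ≤ μ_a < 1, 1 ≤ μ_b < 2, a(x) = x^{μ_a} on [0,1], b(x) = (1+x)^{μ_b} on [−1,0]. Then for every f ∈ L²(0,1), g ∈ L²(−1,0) and c ∈ ℂ, there exists a unique pair (u, w) with u ∈ V²_a(0,1) and w ∈ V²_b(−1,0) such that (a u')' = f a.e. on (0,1), (b w')' = g a.e. on (−1,0), u(0) = w(0), lim_{x→0⁺}(a u')(x) = (b w')(0), and γ u(1) + u'(1) = c. Moreover, for this solution (b w')(0) = ∫_{−1}^0 g(r) dr. -/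
open MeasureTheory Set Filter Topology

/-- `u ∈ V¹_α(x₀, ℓ)` (complex-valued): `u ∈ L²(x₀, ℓ)`, `u` is locally absolutely
continuous on `(x₀, ℓ]` with a.e. derivative `u'` (expressed via the fundamental theorem of
calculus on compact subintervals of `(x₀, ℓ]`), and `√α · u' ∈ L²(x₀, ℓ)`. -/
def MemV1C (x₀ ℓ : ℝ) (α : ℝ → ℝ) (u u' : ℝ → ℂ) : Prop :=
  MemLp u 2 (volume.restrict (Ioo x₀ ℓ)) ∧
  (∀ x y : ℝ, x₀ < x → x ≤ y → y ≤ ℓ →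
    IntervalIntegrable u' volume x y ∧ u y - u x = ∫ t in x..y, u' t) ∧
  MemLp (fun x => Real.sqrt (α x) • u' x) 2 (volume.restrict (Ioo x₀ ℓ))

/-- `u ∈ V²_α(x₀, ℓ)` (complex-valued): `u ∈ V¹_α(x₀, ℓ)` and `α·u' ∈ H¹(x₀, ℓ)`, i.e.
`α·u' ∈ L²`, it is absolutely continuous with a.e. derivative `g' = (α u')' ∈ L²`. -/
def MemV2C (x₀ ℓ : ℝ) (α : ℝ → ℝ) (u u' g' : ℝ → ℂ) : Prop :=
  MemV1C x₀ ℓ α u u' ∧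
  MemLp (fun x => α x • u' x) 2 (volume.restrict (Ioo x₀ ℓ)) ∧
  MemLp g' 2 (volume.restrict (Ioo x₀ ℓ)) ∧
  ∀ x y : ℝ, x₀ < x → x ≤ y → y ≤ ℓ →
    IntervalIntegrable g' volume x y ∧ α y • u' y - α x • u' x = ∫ t in x..y, g' t

/-- The boundary value problem for the resolvent at `0` (strongly degenerate left string,
`1 ≤ μ_b < 2`): `u ∈ V²_a(0,1)`, `w ∈ V²_b(-1,0)`, `(a u')' = f` a.e. on `(0,1)`,
`(b w')' = g` a.e. on `(-1,0)`, `u(0) = w(0)`, `lim_{x→0⁺}(a u')(x) = (b w')(0)`, and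
`γ u(1) + u'(1) = c`. -/
def SolStrong (γ μa μb : ℝ) (f g : ℝ → ℂ) (c : ℂ) (u u' gu w w' gw : ℝ → ℂ) : Prop :=
  MemV2C 0 1 (fun x => x ^ μa) u u' gu ∧
  MemV2C (-1) 0 (fun x => (1 + x) ^ μb) w w' gw ∧
  gu =ᵐ[volume.restrict (Ioo (0 : ℝ) 1)] f ∧
  gw =ᵐ[volume.restrict (Ioo (-1 : ℝ) 0)] g ∧
  Tendsto u (𝓝[>] (0 : ℝ)) (𝓝 (w 0)) ∧
  Tendsto (fun x : ℝ => (x ^ μa : ℝ) • u' x) (𝓝[>] (0 : ℝ))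
    (𝓝 ((((1 : ℝ) + 0) ^ μb : ℝ) • w' 0)) ∧
  (γ : ℂ) * u 1 + u' 1 = c

/-!
Both equations integrate explicitly. The flux `b w'` is the primitive `G x = ∫_{-1}^x g` and
`a u' = G 0 + ∫_0^x f`; then `u` is fixed by the Robin condition at `1` and `w` by continuity at
`0`. By Cauchy–Schwarz `|G x| ≤ ‖g‖₂ √(1 + x)`, so `√b w'` and `w` are square integrable
because `μ_b < 2`, while `μ_a < 1` makes `x ^ (-μ_a)` integrable.

For uniqueness, the difference of two solutions has constant fluxes on both sides, equal by the
transmission condition. On the left `√b w' = B (1 + x) ^ (-μ_b / 2)` is square integrable only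
if `B = 0`, because `μ_b ≥ 1`; so both derivatives agree, and the Robin condition and continuity
at `0` pin down the values.
-/

theorem ContinuousOn.memLp_restrict_Ioo {E : Type*} [NormedAddCommGroup E] {h : ℝ → E}
    {a b : ℝ} (hc : ContinuousOn h (Icc a b)) (p : ENNReal) :
    MemLp h p (volume.restrict (Ioo a b)) := by
  obtain ⟨C, hC⟩ := isCompact_Icc.exists_bound_of_continuousOn hc
  refine MemLp.of_bound ((hc.mono Ioo_subset_Icc_self).aestronglyMeasurable measurableSet_Ioo) C ?_
  filter_upwards [ae_restrict_mem measurableSet_Ioo] with x hx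
  exact hC x (Ioo_subset_Icc_self hx)

theorem ContinuousOn.tendsto_nhdsGT_of_Icc {E : Type*} [TopologicalSpace E] {h : ℝ → E}
    {a b : ℝ} (hc : ContinuousOn h (Icc a b)) (hab : a < b) :
    Tendsto h (𝓝[>] a) (𝓝 (h a)) :=
  (hc a (left_mem_Icc.2 hab.le)).mono_of_mem_nhdsWithin (Icc_mem_nhdsGT hab)

theorem norm_intervalIntegral_le_sqrt_mul_sqrt {E : Type*} [NormedAddCommGroup E]
    [NormedSpace ℝ E] {g : ℝ → E} {a b : ℝ} (hab : a ≤ b)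
    (hg : MemLp g 2 (volume.restrict (Ioc a b))) :
    ‖∫ t in a..b, g t‖ ≤ √(∫ t in a..b, ‖g t‖ ^ 2) * √(b - a) := by
  have hpq : Real.HolderConjugate 2 2 := .two_two
  have hholder := integral_mul_norm_le_Lp_mul_Lq (f := fun t ↦ ‖g t‖) (g := fun _ ↦ (1 : ℝ))
    hpq (by simpa using hg.norm) (by simpa using memLp_const (μ := volume.restrict (Ioc a b)) 1)
  simp only [norm_norm, norm_one, mul_one, integral_const, smul_eq_mul,
    Real.rpow_two] at hholder
  rw [intervalIntegral.integral_of_le hab, intervalIntegral.integral_of_le hab,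
    Real.sqrt_eq_rpow, Real.sqrt_eq_rpow]
  refine (norm_integral_le_integral_norm _).trans (hholder.trans_eq ?_)
  simp [Measure.real, hab]

theorem exists_norm_primitive_le_mul_sqrt {E : Type*} [NormedAddCommGroup E] [NormedSpace ℝ E]
    {g : ℝ → E} {a b : ℝ} (hg : MemLp g 2 (volume.restrict (Ioo a b))) :
    ∃ M, 0 ≤ M ∧ ∀ x ∈ Icc a b, ‖∫ t in a..x, g t‖ ≤ M * √(x - a) := by
  rw [Measure.restrict_congr_set Ioo_ae_eq_Ioc] at hg
  refine ⟨√(∫ t in Ioc a b, ‖g t‖ ^ 2), Real.sqrt_nonneg _, fun x hx ↦ ?_⟩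
  refine (norm_intervalIntegral_le_sqrt_mul_sqrt hx.1
    (hg.mono_measure (Measure.restrict_mono (Ioc_subset_Ioc_right hx.2) le_rfl))).trans ?_
  gcongr
  rw [intervalIntegral.integral_of_le hx.1]
  exact setIntegral_mono_set (hg.integrable_norm_pow two_ne_zero)
    (ae_of_all _ fun _ ↦ by positivity) (Ioc_subset_Ioc_right hx.2).eventuallyLE

theorem memLp_two_rpow_sub {a b r : ℝ} (hr : -1 / 2 < r) :
    MemLp (fun x ↦ (x - a) ^ r) 2 (volume.restrict (Ioo a b)) := by
  have hc : ContinuousOn (fun x ↦ (x - a) ^ r) (Ioo a b) :=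
    (continuousOn_id.sub continuousOn_const).rpow_const fun x hx ↦ Or.inl (sub_pos.2 hx.1).ne'
  rw [memLp_two_iff_integrable_sq_norm (hc.aestronglyMeasurable measurableSet_Ioo)]
  have hint : IntervalIntegrable (fun x ↦ (x - a) ^ (2 * r)) volume a b := by
    simpa using (intervalIntegral.intervalIntegrable_rpow' (a := 0) (b := b - a)
      (r := 2 * r) (by linarith)).comp_sub_right a
  refine (hint.def'.mono_set fun x hx ↦ ?_).congr_fun (fun x hx ↦ ?_) measurableSet_Ioo
  · rw [uIoc_of_le (hx.1.trans hx.2).le]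
    exact Ioo_subset_Ioc_self hx
  · rw [Real.norm_of_nonneg (Real.rpow_nonneg (sub_pos.2 hx.1).le _), ← Real.rpow_natCast,
      ← Real.rpow_mul (sub_pos.2 hx.1).le]
    ring_nf

theorem integral_one_add_rpow_le {q x : ℝ} (hq : q < -1) (hx : -1 < x) :
    ∫ t in x..0, (1 + t) ^ q ≤ (1 + x) ^ (q + 1) / -(q + 1) := by
  have h0 : (0 : ℝ) ∉ uIcc (1 + x) 1 := notMem_uIcc_of_lt (by linarith) one_pos
  rw [intervalIntegral.integral_comp_add_left (fun t ↦ t ^ q), add_zero,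
    integral_rpow (Or.inr ⟨hq.ne, h0⟩), Real.one_rpow, ← neg_div_neg_eq, neg_sub]
  gcongr
  · linarith
  · linarith

theorem MemV2C.of_flux {x₀ ℓ : ℝ} {α : ℝ → ℝ} {u u' φ : ℝ → ℂ} {Φ₀ uℓ : ℂ} (hxℓ : x₀ ≤ ℓ)
    (hα : ∀ x ∈ Ioc x₀ ℓ, 0 < α x) (hαc : ContinuousOn α (Ioc x₀ ℓ))
    (hφ : MemLp φ 2 (volume.restrict (Ioo x₀ ℓ)))
    (hflux : ∀ x ∈ Ioc x₀ ℓ, α x • u' x = Φ₀ + ∫ t in x₀..x, φ t)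
    (hu : ∀ x ∈ Ioc x₀ ℓ, u x = uℓ - ∫ t in x..ℓ, u' t)
    (hu2 : MemLp u 2 (volume.restrict (Ioo x₀ ℓ)))
    (hsqrt : MemLp (fun x ↦ √(α x) • u' x) 2 (volume.restrict (Ioo x₀ ℓ))) :
    MemV2C x₀ ℓ α u u' φ := by
  have hφi : IntervalIntegrable φ volume x₀ ℓ :=
    (intervalIntegrable_iff_integrableOn_Ioo_of_le hxℓ).2 (hφ.integrable one_le_two)
  have hΦ : ContinuousOn (fun x ↦ Φ₀ + ∫ t in x₀..x, φ t) (Icc x₀ ℓ) := by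
    have := intervalIntegral.continuousOn_primitive_interval' hφi left_mem_uIcc
    rw [uIcc_of_le hxℓ] at this
    exact continuousOn_const.add this
  have hu' : ContinuousOn u' (Ioc x₀ ℓ) := by
    refine ((hαc.inv₀ fun x hx ↦ (hα x hx).ne').smul (hΦ.mono Ioc_subset_Icc_self)).congr
      fun x hx ↦ ?_
    rw [Pi.smul_apply', Pi.inv_apply, ← hflux x hx, inv_smul_smul₀ (hα x hx).ne']
  have hu'i {x y : ℝ} (hx : x₀ < x) (hxy : x ≤ y) (hy : y ≤ ℓ) :
      IntervalIntegrable u' volume x y := by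
    refine (hu'.mono ?_).intervalIntegrable
    rw [uIcc_of_le hxy]
    exact fun t ht ↦ ⟨hx.trans_le ht.1, ht.2.trans hy⟩
  have hφi' {x y : ℝ} (hx : x₀ ≤ x) (hxy : x ≤ y) (hy : y ≤ ℓ) :
      IntervalIntegrable φ volume x y := by
    refine hφi.mono_set ?_
    rw [uIcc_of_le hxℓ, uIcc_of_le hxy]
    exact Icc_subset_Icc hx hy
  refine ⟨⟨hu2, fun x y hx hxy hy ↦ ⟨hu'i hx hxy hy, ?_⟩, hsqrt⟩, ?_, hφ,
    fun x y hx hxy hy ↦ ⟨hφi' hx.le hxy hy, ?_⟩⟩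
  · rw [hu y ⟨hx.trans_le hxy, hy⟩, hu x ⟨hx, hxy.trans hy⟩, sub_sub_sub_cancel_left,
      ← intervalIntegral.integral_add_adjacent_intervals (hu'i hx hxy hy)
        (hu'i (hx.trans_le hxy) hy le_rfl), add_sub_cancel_right]
  · refine (hΦ.memLp_restrict_Ioo 2).ae_eq ?_
    filter_upwards [ae_restrict_mem measurableSet_Ioo] with x hx
    exact (hflux x (Ioo_subset_Ioc_self hx)).symm
  · rw [hflux y ⟨hx.trans_le hxy, hy⟩, hflux x ⟨hx, hxy.trans hy⟩, add_sub_add_left_eq_sub,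
      intervalIntegral.integral_interval_sub_left (hφi' le_rfl (hx.le.trans hxy) hy)
        (hφi' le_rfl hx.le (hxy.trans hy))]

theorem norm_sqrt_rpow_smul_inv_rpow_smul {a r : ℝ} (ha : 0 < a) (z : ℂ) :
    ‖√(a ^ r) • (a ^ r)⁻¹ • z‖ = a ^ (-(r / 2)) * ‖z‖ := by
  have har : 0 < a ^ r := Real.rpow_pos_of_pos ha r
  rw [norm_smul, norm_smul, norm_inv, Real.norm_of_nonneg (Real.sqrt_nonneg _),
    Real.norm_of_nonneg har.le, ← mul_assoc, Real.sqrt_eq_rpow, ← Real.rpow_mul ha.le,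
    ← Real.rpow_neg ha.le, ← Real.rpow_add ha]
  ring_nf

namespace SolStrong

variable (μa μb γ : ℝ) (f g : ℝ → ℂ) (c : ℂ)

noncomputable def fluxW (x : ℝ) : ℂ := ∫ t in (-1)..x, g t

noncomputable def derivW (x : ℝ) : ℂ := ((1 + x) ^ μb)⁻¹ • fluxW g x

noncomputable def fluxU (x : ℝ) : ℂ := fluxW g 0 + ∫ t in 0..x, f t

noncomputable def derivU (x : ℝ) : ℂ := (x ^ μa)⁻¹ • fluxU f g x

noncomputable def solU (x : ℝ) : ℂ := (c - fluxU f g 1) / γ - ∫ t in x..1, derivU μa f g t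

noncomputable def solW (x : ℝ) : ℂ := solU μa γ f g c 0 - ∫ t in x..0, derivW μb g t

variable {μa μb γ f g c}

theorem continuousOn_fluxU (hf : MemLp f 2 (volume.restrict (Ioo 0 1))) :
    ContinuousOn (fluxU f g) (Icc 0 1) := by
  have hint : IntegrableOn f (uIcc 0 1) := by
    rw [uIcc_of_le zero_le_one, integrableOn_Icc_iff_integrableOn_Ioo]
    exact hf.integrable one_le_two
  have := intervalIntegral.continuousOn_primitive_interval hint
  rw [uIcc_of_le zero_le_one] at this
  exact continuousOn_const.add this

theorem continuousOn_derivU (hf : MemLp f 2 (volume.restrict (Ioo 0 1))) :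
    ContinuousOn (derivU μa f g) (Ioc 0 1) :=
  ((continuousOn_id.rpow_const fun _ hx ↦ Or.inl hx.1.ne').inv₀
    (fun _ hx ↦ (Real.rpow_pos_of_pos hx.1 μa).ne')).smul
    ((continuousOn_fluxU hf).mono Ioc_subset_Icc_self)

theorem integrableOn_derivU (hμa1 : μa < 1) (hf : MemLp f 2 (volume.restrict (Ioo 0 1))) :
    IntegrableOn (derivU μa f g) (Icc 0 1) := by
  obtain ⟨C, hC⟩ := isCompact_Icc.exists_bound_of_continuousOn (continuousOn_fluxU (g := g) hf)
  have hdom : IntegrableOn (fun x : ℝ ↦ C * x ^ (-μa)) (Ioc 0 1) :=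
    ((intervalIntegrable_iff_integrableOn_Ioc_of_le zero_le_one).1
      (intervalIntegral.intervalIntegrable_rpow' (by linarith))).const_mul C
  rw [integrableOn_Icc_iff_integrableOn_Ioc]
  refine hdom.mono' ((continuousOn_derivU hf).aestronglyMeasurable measurableSet_Ioc) ?_
  filter_upwards [ae_restrict_mem measurableSet_Ioc] with x hx
  rw [derivU, norm_smul, norm_inv, Real.norm_of_nonneg (Real.rpow_nonneg hx.1.le _),
    Real.rpow_neg hx.1.le, mul_comm]
  exact mul_le_mul_of_nonneg_right (hC x (Ioc_subset_Icc_self hx))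
    (inv_nonneg.2 (Real.rpow_nonneg hx.1.le _))

theorem continuousOn_solU (hμa1 : μa < 1) (hf : MemLp f 2 (volume.restrict (Ioo 0 1))) :
    ContinuousOn (solU μa γ f g c) (Icc 0 1) := by
  have hint : IntegrableOn (derivU μa f g) (uIcc 0 1) := by
    rw [uIcc_of_le zero_le_one]
    exact integrableOn_derivU hμa1 hf
  have := intervalIntegral.continuousOn_primitive_interval_left hint
  rw [uIcc_of_le zero_le_one] at this
  exact continuousOn_const.sub this

theorem memLp_sqrt_smul_derivU (hμa1 : μa < 1) (hf : MemLp f 2 (volume.restrict (Ioo 0 1))) :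
    MemLp (fun x ↦ √(x ^ μa) • derivU μa f g x) 2 (volume.restrict (Ioo 0 1)) := by
  obtain ⟨C, hC⟩ := isCompact_Icc.exists_bound_of_continuousOn (continuousOn_fluxU (g := g) hf)
  have hdom := (memLp_two_rpow_sub (a := 0) (b := 1) (r := -(μa / 2)) (by linarith)).const_mul C
  refine hdom.mono' (ContinuousOn.aestronglyMeasurable ?_ measurableSet_Ioo) ?_
  · exact ((Real.continuous_sqrt.comp_continuousOn (continuousOn_id.rpow_const
      fun _ hx ↦ Or.inl hx.1.ne')).smul (continuousOn_derivU hf)).mono Ioo_subset_Ioc_self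
  · filter_upwards [ae_restrict_mem measurableSet_Ioo] with x hx
    rw [derivU, norm_sqrt_rpow_smul_inv_rpow_smul hx.1, sub_zero, mul_comm]
    exact mul_le_mul_of_nonneg_right (hC x (Ioo_subset_Icc_self hx)) (Real.rpow_nonneg hx.1.le _)

theorem memV2C_solU (hμa1 : μa < 1) (hf : MemLp f 2 (volume.restrict (Ioo 0 1))) :
    MemV2C 0 1 (fun x ↦ x ^ μa) (solU μa γ f g c) (derivU μa f g) f :=
  MemV2C.of_flux zero_le_one (fun _ hx ↦ Real.rpow_pos_of_pos hx.1 μa)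
    (continuousOn_id.rpow_const fun _ hx ↦ Or.inl hx.1.ne') hf
    (fun _ hx ↦ smul_inv_smul₀ (Real.rpow_pos_of_pos hx.1 μa).ne' _) (fun _ _ ↦ rfl)
    ((continuousOn_solU hμa1 hf).memLp_restrict_Ioo 2) (memLp_sqrt_smul_derivU hμa1 hf)

theorem continuousOn_fluxW (hg : MemLp g 2 (volume.restrict (Ioo (-1) 0))) :
    ContinuousOn (fluxW g) (Icc (-1) 0) := by
  have hint : IntegrableOn g (uIcc (-1) 0) := by
    rw [uIcc_of_le (by norm_num), integrableOn_Icc_iff_integrableOn_Ioo]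
    exact hg.integrable one_le_two
  have := intervalIntegral.continuousOn_primitive_interval hint
  rwa [uIcc_of_le (by norm_num)] at this

theorem exists_norm_fluxW_le (hg : MemLp g 2 (volume.restrict (Ioo (-1) 0))) :
    ∃ M, 0 ≤ M ∧ ∀ x ∈ Icc (-1) 0, ‖fluxW g x‖ ≤ M * √(1 + x) := by
  simpa [fluxW, add_comm] using exists_norm_primitive_le_mul_sqrt hg

theorem continuousOn_one_add_rpow (r : ℝ) : ContinuousOn (fun x : ℝ ↦ (1 + x) ^ r) (Ioi (-1)) :=
  (continuousOn_const.add continuousOn_id).rpow_const fun x hx ↦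
    Or.inl (show 1 + x ≠ 0 by linarith [mem_Ioi.1 hx])

theorem continuousOn_derivW (hg : MemLp g 2 (volume.restrict (Ioo (-1) 0))) :
    ContinuousOn (derivW μb g) (Ioc (-1) 0) :=
  (((continuousOn_one_add_rpow μb).mono fun _ hx ↦ hx.1).inv₀
    fun x hx ↦ (Real.rpow_pos_of_pos (by linarith [hx.1]) μb).ne').smul
    ((continuousOn_fluxW hg).mono Ioc_subset_Icc_self)

theorem norm_derivW_le {M : ℝ} (hM : ∀ x ∈ Icc (-1) 0, ‖fluxW g x‖ ≤ M * √(1 + x))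
    {x : ℝ} (hx : x ∈ Ioc (-1) 0) : ‖derivW μb g x‖ ≤ M * (1 + x) ^ (1 / 2 - μb) := by
  have hpos : 0 < 1 + x := by linarith [hx.1]
  rw [derivW, norm_smul, norm_inv, Real.norm_of_nonneg (Real.rpow_nonneg hpos.le _),
    ← Real.rpow_neg hpos.le, sub_eq_add_neg, Real.rpow_add hpos, ← Real.sqrt_eq_rpow,
    mul_comm, ← mul_assoc]
  exact mul_le_mul_of_nonneg_right (hM x (Ioc_subset_Icc_self hx)) (Real.rpow_nonneg hpos.le _)

theorem memLp_sqrt_smul_derivW (hμb2 : μb < 2) (hg : MemLp g 2 (volume.restrict (Ioo (-1) 0))) :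
    MemLp (fun x ↦ √((1 + x) ^ μb) • derivW μb g x) 2 (volume.restrict (Ioo (-1) 0)) := by
  obtain ⟨M, -, hM⟩ := exists_norm_fluxW_le hg
  have hdom := (memLp_two_rpow_sub (a := -1) (b := 0) (r := (1 - μb) / 2) (by linarith)).const_mul M
  refine hdom.mono' (ContinuousOn.aestronglyMeasurable ?_ measurableSet_Ioo) ?_
  · exact ((Real.continuous_sqrt.comp_continuousOn ((continuousOn_one_add_rpow μb).mono
      fun _ hx ↦ hx.1)).smul (continuousOn_derivW hg)).mono Ioo_subset_Ioc_self
  · filter_upwards [ae_restrict_mem measurableSet_Ioo] with x hx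
    have hpos : 0 < 1 + x := by linarith [hx.1]
    rw [derivW, norm_sqrt_rpow_smul_inv_rpow_smul hpos, sub_neg_eq_add, add_comm x,
      show (1 - μb) / 2 = -(μb / 2) + 1 / 2 by ring, Real.rpow_add hpos, ← Real.sqrt_eq_rpow]
    calc (1 + x) ^ (-(μb / 2)) * ‖fluxW g x‖ ≤ (1 + x) ^ (-(μb / 2)) * (M * √(1 + x)) :=
          mul_le_mul_of_nonneg_left (hM x (Ioo_subset_Icc_self hx)) (Real.rpow_nonneg hpos.le _)
      _ = M * ((1 + x) ^ (-(μb / 2)) * √(1 + x)) := by ring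

theorem continuousOn_solW (hg : MemLp g 2 (volume.restrict (Ioo (-1) 0))) :
    ContinuousOn (solW μa μb γ f g c) (Ioc (-1) 0) := by
  intro x hx
  have hx₁ : (x - 1) / 2 < x := by linarith [hx.1]
  have hIcc : uIcc ((x - 1) / 2) 0 = Icc ((x - 1) / 2) 0 := uIcc_of_le (by linarith [hx.2])
  have hint : IntegrableOn (derivW μb g) (uIcc ((x - 1) / 2) 0) := by
    rw [hIcc]
    exact ((continuousOn_derivW hg).mono fun t ht ↦
      ⟨by linarith [ht.1, hx.1], ht.2⟩).integrableOn_Icc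
  have hcont : ContinuousOn (solW μa μb γ f g c) (uIcc ((x - 1) / 2) 0) :=
    continuousOn_const.sub (intervalIntegral.continuousOn_primitive_interval_left hint)
  refine (hcont x (hIcc ▸ ⟨hx₁.le, hx.2⟩)).mono_of_mem_nhdsWithin
    (mem_nhdsWithin.2 ⟨Ioi ((x - 1) / 2), isOpen_Ioi, hx₁, fun t ht ↦ ?_⟩)
  rw [hIcc]
  exact ⟨le_of_lt ht.1, ht.2.2⟩

theorem memLp_solW (hμb2 : μb < 2) (hg : MemLp g 2 (volume.restrict (Ioo (-1) 0))) :
    MemLp (solW μa μb γ f g c) 2 (volume.restrict (Ioo (-1) 0)) := by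
  obtain ⟨M, hM0, hM⟩ := exists_norm_fluxW_le hg
  -- `q < -1` avoids the logarithmic primitive; `q > -3/2` keeps `(1 + x) ^ (q + 1)` in `L²`
  set q := min (1 / 2 - μb) (-5 / 4)
  have hq : q < -1 := (min_le_right _ _).trans_lt (by norm_num)
  have hq' : -3 / 2 < q := lt_min (by linarith) (by norm_num)
  have hdom := (memLp_const ‖solU μa γ f g c 0‖).add
    ((memLp_two_rpow_sub (a := -1) (b := 0) (r := q + 1) (by linarith)).const_mul (M / -(q + 1)))
  refine hdom.mono' (((continuousOn_solW hg).mono Ioo_subset_Ioc_self).aestronglyMeasurable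
    measurableSet_Ioo) ?_
  filter_upwards [ae_restrict_mem measurableSet_Ioo] with x hx
  have hpow : ContinuousOn (fun t ↦ M * (1 + t) ^ q) (uIcc x 0) :=
    continuousOn_const.mul ((continuousOn_one_add_rpow q).mono fun t ht ↦ by
      rw [uIcc_of_le hx.2.le] at ht
      exact hx.1.trans_le ht.1)
  have hint : ‖∫ t in x..0, derivW μb g t‖ ≤ ∫ t in x..0, M * (1 + t) ^ q := by
    refine intervalIntegral.norm_integral_le_of_norm_le hx.2.le
      (ae_of_all _ fun t ht ↦ ?_) hpow.intervalIntegrable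
    have ht' : 0 < 1 + t := by linarith [hx.1, ht.1]
    exact (norm_derivW_le hM ⟨hx.1.trans ht.1, ht.2⟩).trans (mul_le_mul_of_nonneg_left
      (Real.rpow_le_rpow_of_exponent_ge ht' (by linarith [ht.2]) (min_le_left _ _)) hM0)
  calc ‖solW μa μb γ f g c x‖ ≤ ‖solU μa γ f g c 0‖ + ‖∫ t in x..0, derivW μb g t‖ :=
        norm_sub_le _ _
    _ ≤ ‖solU μa γ f g c 0‖ + M * ((1 + x) ^ (q + 1) / -(q + 1)) := by
        rw [intervalIntegral.integral_const_mul] at hint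
        gcongr
        exact hint.trans (mul_le_mul_of_nonneg_left (integral_one_add_rpow_le hq hx.1) hM0)
    _ = _ := by rw [Pi.add_apply, sub_neg_eq_add, add_comm x]; ring

theorem memV2C_solW (hμb2 : μb < 2) (hg : MemLp g 2 (volume.restrict (Ioo (-1) 0))) :
    MemV2C (-1) 0 (fun x ↦ (1 + x) ^ μb) (solW μa μb γ f g c) (derivW μb g) g :=
  MemV2C.of_flux (by norm_num) (fun _ hx ↦ Real.rpow_pos_of_pos (by linarith [hx.1]) μb)
    ((continuousOn_one_add_rpow μb).mono fun _ hx ↦ hx.1) hg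
    (fun _ hx ↦ (smul_inv_smul₀ (Real.rpow_pos_of_pos (by linarith [hx.1]) μb).ne' _).trans
      (zero_add _).symm) (fun _ _ ↦ rfl) (memLp_solW hμb2 hg) (memLp_sqrt_smul_derivW hμb2 hg)

theorem fluxW_zero : fluxW g 0 = ∫ r in Ioo (-1) 0, g r := by
  rw [fluxW, intervalIntegral.integral_of_le (by norm_num), integral_Ioc_eq_integral_Ioo]

theorem smul_derivW_zero : ((1 : ℝ) + 0) ^ μb • derivW μb g 0 = fluxW g 0 := by
  simp [derivW]

theorem solStrong_solU_solW (hγ : 0 < γ) (hμa1 : μa < 1) (hμb2 : μb < 2)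
    (hf : MemLp f 2 (volume.restrict (Ioo 0 1))) (hg : MemLp g 2 (volume.restrict (Ioo (-1) 0))) :
    SolStrong γ μa μb f g c (solU μa γ f g c) (derivU μa f g) f
      (solW μa μb γ f g c) (derivW μb g) g := by
  refine ⟨memV2C_solU hμa1 hf, memV2C_solW hμb2 hg, .rfl, .rfl, ?_, ?_, ?_⟩
  · simpa [solW] using (continuousOn_solU hμa1 hf).tendsto_nhdsGT_of_Icc zero_lt_one
  · rw [smul_derivW_zero]
    refine (((continuousOn_fluxU (g := g) hf).tendsto_nhdsGT_of_Icc zero_lt_one).congr' ?_)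
      |>.trans_eq ?_
    · filter_upwards [self_mem_nhdsWithin] with x hx
      exact (smul_inv_smul₀ (Real.rpow_pos_of_pos hx μa).ne' _).symm
    · simp [fluxU]
  · simp only [solU, derivU, intervalIntegral.integral_same, sub_zero, Real.one_rpow, inv_one,
      one_smul]
    field_simp [Complex.ofReal_ne_zero.2 hγ.ne']
    ring

end SolStrong

theorem eq_zero_of_memLp_sqrt_smul {X E : Type*} [MeasurableSpace X] {μ : Measure X}
    [NormedAddCommGroup E] [NormedSpace ℝ E] {α : X → ℝ} {v : X → E} {B : E} {s : Set X}
    (hs : MeasurableSet s) (hα : ∀ x ∈ s, 0 < α x) (hv : ∀ x ∈ s, α x • v x = B)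
    (hL2 : MemLp (fun x ↦ √(α x) • v x) 2 (μ.restrict s))
    (hinv : ¬ IntegrableOn (fun x ↦ (α x)⁻¹) s μ) : B = 0 := by
  by_contra hB
  refine hinv (IntegrableOn.congr_fun
    ((hL2.integrable_norm_pow two_ne_zero).const_mul (‖B‖ ^ 2)⁻¹) (fun x hx ↦ ?_) hs)
  have hvx : ‖B‖ = α x * ‖v x‖ := by
    rw [← hv x hx, norm_smul, Real.norm_of_nonneg (hα x hx).le]
  have hv0 : ‖v x‖ ≠ 0 := fun h ↦ hB (norm_eq_zero.1 (by rw [hvx, h, mul_zero]))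
  rw [norm_smul, Real.norm_of_nonneg (Real.sqrt_nonneg _), mul_pow,
    Real.sq_sqrt (hα x hx).le, hvx]
  field_simp

theorem not_integrableOn_one_add_rpow_inv {r : ℝ} (hr : 1 ≤ r) :
    ¬ IntegrableOn (fun x : ℝ ↦ ((1 + x) ^ r)⁻¹) (Ioo (-1) 0) := by
  intro h
  have hshift :=
    ((intervalIntegrable_iff_integrableOn_Ioo_of_le (by norm_num)).2 h).comp_sub_right 1
  norm_num at hshift
  rw [intervalIntegrable_iff_integrableOn_Ioo_of_le zero_le_one] at hshift
  have hpow : IntegrableOn (fun x : ℝ ↦ x ^ (-r)) (Ioo 0 1) :=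
    hshift.congr_fun (fun x hx ↦ (Real.rpow_neg hx.1.le r).symm) measurableSet_Ioo
  rw [intervalIntegral.integrableOn_Ioo_rpow_iff zero_lt_one] at hpow
  linarith

theorem MemV2C.smul_sub_eq {x₀ ℓ : ℝ} {α : ℝ → ℝ} {u u' gu u₁ u₁' gu₁ : ℝ → ℂ}
    (h : MemV2C x₀ ℓ α u u' gu) (h₁ : MemV2C x₀ ℓ α u₁ u₁' gu₁)
    (hg : gu₁ =ᵐ[volume.restrict (Ioo x₀ ℓ)] gu) :
    ∀ x ∈ Ioc x₀ ℓ, α x • (u₁' x - u' x) = α ℓ • (u₁' ℓ - u' ℓ) := by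
  intro x hx
  rw [Measure.restrict_congr_set Ioo_ae_eq_Ioc, EventuallyEq,
    ae_restrict_iff' measurableSet_Ioc] at hg
  have hint : ∫ t in x..ℓ, gu₁ t = ∫ t in x..ℓ, gu t := by
    refine intervalIntegral.integral_congr_ae (hg.mono fun t ht htx ↦ ht ?_)
    rw [uIoc_of_le hx.2] at htx
    exact ⟨hx.1.trans htx.1, htx.2⟩
  have e := (h.2.2.2 x ℓ hx.1 hx.2 le_rfl).2
  have e₁ := (h₁.2.2.2 x ℓ hx.1 hx.2 le_rfl).2
  rw [hint, ← e] at e₁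
  rw [smul_sub, smul_sub]
  linear_combination -e₁

theorem MemV1C.eqOn_of_deriv_eqOn {x₀ ℓ : ℝ} {α : ℝ → ℝ} {u u' u₁ u₁' : ℝ → ℂ}
    (h : MemV1C x₀ ℓ α u u') (h₁ : MemV1C x₀ ℓ α u₁ u₁')
    (hd : ∀ x ∈ Ioc x₀ ℓ, u₁' x = u' x) (hℓ : u₁ ℓ = u ℓ) :
    ∀ x ∈ Ioc x₀ ℓ, u₁ x = u x := by
  intro x hx
  have hint : ∫ t in x..ℓ, u₁' t = ∫ t in x..ℓ, u' t :=
    intervalIntegral.integral_congr fun t ht ↦ by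
      rw [uIcc_of_le hx.2] at ht
      exact hd t ⟨hx.1.trans_le ht.1, ht.2⟩
  have e := (h.2.1 x ℓ hx.1 hx.2 le_rfl).2
  have e₁ := (h₁.2.1 x ℓ hx.1 hx.2 le_rfl).2
  rw [hint, ← e, hℓ] at e₁
  linear_combination -e₁

theorem SolStrong.deriv_eqOn {γ μa μb : ℝ} {f g : ℝ → ℂ} {c : ℂ}
    {u u' gu w w' gw u₁ u₁' gu₁ w₁ w₁' gw₁ : ℝ → ℂ} (hμb1 : 1 ≤ μb)
    (h : SolStrong γ μa μb f g c u u' gu w w' gw)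
    (h₁ : SolStrong γ μa μb f g c u₁ u₁' gu₁ w₁ w₁' gw₁) :
    (∀ x ∈ Ioc 0 1, u₁' x = u' x) ∧ (∀ x ∈ Ioc (-1) 0, w₁' x = w' x) := by
  obtain ⟨hU, hW, hgu, hgw, -, hflux, -⟩ := h
  obtain ⟨hU₁, hW₁, hgu₁, hgw₁, -, hflux₁, -⟩ := h₁
  have hA := hU.smul_sub_eq hU₁ (hgu₁.trans hgu.symm)
  have hB := hW.smul_sub_eq hW₁ (hgw₁.trans hgw.symm)
  simp only [Real.one_rpow, one_smul] at hA
  have hAB : u₁' 1 - u' 1 = ((1 : ℝ) + 0) ^ μb • (w₁' 0 - w' 0) := by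
    refine tendsto_nhds_unique (tendsto_const_nhds.congr' ?_) ((hflux₁.sub hflux).trans_eq
      (congrArg 𝓝 (smul_sub _ _ _).symm))
    filter_upwards [Ioc_mem_nhdsGT zero_lt_one] with x hx
    rw [← hA x hx, smul_sub]
  have hB0 : ((1 : ℝ) + 0) ^ μb • (w₁' 0 - w' 0) = 0 := by
    refine eq_zero_of_memLp_sqrt_smul (v := w₁' - w') measurableSet_Ioo
      (fun x hx ↦ Real.rpow_pos_of_pos (by linarith [hx.1]) μb)
      (fun x hx ↦ hB x (Ioo_subset_Ioc_self hx)) ?_ (not_integrableOn_one_add_rpow_inv hμb1)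
    simpa only [Pi.sub_def, smul_sub] using hW₁.1.2.2.sub hW.1.2.2
  have cancel {a : ℝ} {z z₁ : ℂ} (ha : 0 < a) (hz : a • (z₁ - z) = 0) : z₁ = z :=
    sub_eq_zero.1 ((smul_eq_zero.1 hz).resolve_left ha.ne')
  refine ⟨fun x hx ↦ cancel (Real.rpow_pos_of_pos hx.1 μa) ((hA x hx).trans (hAB.trans hB0)),
    fun x hx ↦ cancel (Real.rpow_pos_of_pos (by linarith [hx.1]) μb) ((hB x hx).trans hB0)⟩

theorem SolStrong.eqOn {γ μa μb : ℝ} {f g : ℝ → ℂ} {c : ℂ}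
    {u u' gu w w' gw u₁ u₁' gu₁ w₁ w₁' gw₁ : ℝ → ℂ} (hγ : 0 < γ) (hμb1 : 1 ≤ μb)
    (h : SolStrong γ μa μb f g c u u' gu w w' gw)
    (h₁ : SolStrong γ μa μb f g c u₁ u₁' gu₁ w₁ w₁' gw₁) :
    (∀ x ∈ Ioc 0 1, u₁ x = u x) ∧ (∀ x ∈ Ioc (-1) 0, w₁ x = w x) := by
  obtain ⟨hu', hw'⟩ := h.deriv_eqOn hμb1 h₁
  obtain ⟨hU, hW, -, -, hlim, -, hbc⟩ := h
  obtain ⟨hU₁, hW₁, -, -, hlim₁, -, hbc₁⟩ := h₁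
  have hu1 : u₁ 1 = u 1 := by
    rw [← hbc, hu' 1 ⟨one_pos, le_rfl⟩, add_left_inj] at hbc₁
    exact mul_left_cancel₀ (Complex.ofReal_ne_zero.2 hγ.ne') hbc₁
  have hu := hU.1.eqOn_of_deriv_eqOn hU₁.1 hu' hu1
  have hw0 : w₁ 0 = w 0 := by
    refine tendsto_nhds_unique hlim₁ (hlim.congr' ?_)
    filter_upwards [Ioc_mem_nhdsGT zero_lt_one] with x hx
    exact (hu x hx).symm
  exact ⟨hu, hW.1.eqOn_of_deriv_eqOn hW₁.1 hw' hw0⟩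

theorem surjective_strong_general (γ μa μb : ℝ) (hγ : 0 < γ)
    (hμa1 : μa < 1) (hμb1 : 1 ≤ μb) (hμb2 : μb < 2)
    (f g : ℝ → ℂ) (c : ℂ)
    (hf : MemLp f 2 (volume.restrict (Ioo (0 : ℝ) 1)))
    (hg : MemLp g 2 (volume.restrict (Ioo (-1 : ℝ) 0))) :
    ∃ u u' gu w w' gw : ℝ → ℂ, SolStrong γ μa μb f g c u u' gu w w' gw ∧
      ((((1 : ℝ) + 0) ^ μb : ℝ) • w' 0 = ∫ r in Ioo (-1 : ℝ) 0, g r) ∧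
      ∀ u₁ u₁' gu₁ w₁ w₁' gw₁ : ℝ → ℂ, SolStrong γ μa μb f g c u₁ u₁' gu₁ w₁ w₁' gw₁ →
        (∀ x ∈ Ioc (0 : ℝ) 1, u₁ x = u x) ∧ (∀ x ∈ Ioc (-1 : ℝ) 0, w₁ x = w x) := by
  have hsol := SolStrong.solStrong_solU_solW (c := c) hγ hμa1 hμb2 hf hg
  refine ⟨_, _, _, _, _, _, hsol, ?_, fun _ _ _ _ _ _ h₁ ↦ hsol.eqOn hγ hμb1 h₁⟩
  rw [SolStrong.smul_derivW_zero, SolStrong.fluxW_zero]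

/-- For every `f ∈ L²(0,1)`, `g ∈ L²(-1,0)` and `c ∈ ℂ` there is a unique
pair `(u, w)` (unique as functions on `(0,1]` and `(-1,0]` respectively) with `u ∈ V²_a(0,1)`,
`w ∈ V²_b(-1,0)` solving the boundary value problem `SolStrong`; moreover, for this solution
`(b w')(0) = ∫_{-1}^0 g(r) dr`. -/
theorem surjective_strong (γ μa μb : ℝ) (hγ : 0 < γ)
    (hμa0 : 0 ≤ μa) (hμa1 : μa < 1) (hμb1 : 1 ≤ μb) (hμb2 : μb < 2)
    (f g : ℝ → ℂ) (c : ℂ)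
    (hf : MemLp f 2 (volume.restrict (Ioo (0 : ℝ) 1)))
    (hg : MemLp g 2 (volume.restrict (Ioo (-1 : ℝ) 0))) :
    ∃ u u' gu w w' gw : ℝ → ℂ, SolStrong γ μa μb f g c u u' gu w w' gw ∧
      ((((1 : ℝ) + 0) ^ μb : ℝ) • w' 0 = ∫ r in Ioo (-1 : ℝ) 0, g r) ∧
      ∀ u₁ u₁' gu₁ w₁ w₁' gw₁ : ℝ → ℂ, SolStrong γ μa μb f g c u₁ u₁' gu₁ w₁ w₁' gw₁ →
        (∀ x ∈ Ioc (0 : ℝ) 1, u₁ x = u x) ∧ (∀ x ∈ Ioc (-1 : ℝ) 0, w₁ x = w x) :=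
  surjective_strong_general γ μa μb hγ hμa1 hμb1 hμb2 f g c hf hg
end

section
/- Let γ > 0, 0 ≤ μ_a < 1, 0 ≤ μ_b < 1, a(x) = x^{μ_a} on [0,1], b(x) = (1+x)^{μ_b} на [−1,0]. Suppose u ∈ V²_a(0,1) and w ∈ V²_b(−1,0) satisfy (a u')' = f a.e. on (0,1) with f ∈ L²(0,1), (b w')' = g a.e. on (−1,0) with g ∈ L²(−1,0), w(−1) = 0, u(0) = w(0), lim_{x→0⁺}(a u')(x) = (b w')(0), and γ u(1) + u'(1) = c. Then (b w')(0) = (1 + γ/(1−μ_a) + γ/(1−μ_b))^{−1} · ( c − ∫₀¹ f(r) dr − γ·∫₀¹ a(s)^{−1} (∫₀^s f(r) dr) ds + γ·∫_{−1}^0 b(s)^{−1} (∫_s^0 g(r) dr) ds ). -/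
/-! The flux `a u'` is absolutely continuous with derivative `f` and has trace `T = (b w')(0)` at
`0⁺`, so `a u' = T + ∫₀ˣ f` on `(0, 1]`; likewise `b w' = T - ∫ₓ⁰ g` on `(-1, 0]`. The inverse
weights are integrable, `∫₀¹ a⁻¹ = 1/(1-μ_a)` and `∫₋₁⁰ b⁻¹ = 1/(1-μ_b)`, so dividing by the weights
and integrating once more expresses `u(1) - u(0⁺)` and `w(0) - w(-1⁺)` as affine functions of `T`.
Feeding these, `u(0⁺) = w(0)`, `w(-1⁺) = 0` and `u'(1) = T + ∫₀¹ f` into the Robin condition gives a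
linear equation for `T` with coefficient `1 + γ/(1-μ_a) + γ/(1-μ_b) > 0`. -/

open MeasureTheory Set Filter Topology

open intervalIntegral

theorem sub_eq_intervalIntegral_of_tendsto {E : Type*} [NormedAddCommGroup E] [NormedSpace ℝ E]
    [CompleteSpace E] {v v' : ℝ → E} {x₀ y : ℝ} {L : E} (hxy : x₀ < y)
    (hv' : IntervalIntegrable v' volume x₀ y)
    (hftc : ∀ x ∈ Ioo x₀ y, v y - v x = ∫ t in x..y, v' t)
    (hlim : Tendsto v (𝓝[>] x₀) (𝓝 L)) :
    v y - L = ∫ t in x₀..y, v' t := by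
  have hcont : ContinuousOn (fun x => ∫ t in x..y, v' t) (Icc x₀ y) := by
    rw [← uIcc_of_le hxy.le]
    exact continuousOn_primitive_interval_left
      ((uIcc_of_le hxy.le).symm ▸ (intervalIntegrable_iff_integrableOn_Icc_of_le hxy.le).1 hv')
  have hprim : Tendsto (fun x => ∫ t in x..y, v' t) (𝓝[>] x₀) (𝓝 (∫ t in x₀..y, v' t)) := by
    rw [← nhdsWithin_Ioo_eq_nhdsGT hxy]
    exact (hcont x₀ (left_mem_Icc.2 hxy.le)).mono Ioo_subset_Icc_self
  refine tendsto_nhds_unique ((tendsto_const_nhds.sub hlim).congr' ?_) hprim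
  filter_upwards [Ioo_mem_nhdsGT hxy] with x hx using hftc x hx

theorem intervalIntegrable_of_memLp_two {E : Type*} [NormedAddCommGroup E] {f : ℝ → E}
    {x₀ ℓ a b : ℝ}
    (hf : MemLp f 2 (volume.restrict (Ioo x₀ ℓ))) (ha : x₀ ≤ a) (hab : a ≤ b) (hb : b ≤ ℓ) :
    IntervalIntegrable f volume a b := by
  have : IsFiniteMeasure (volume.restrict (Ioo x₀ ℓ)) := isFiniteMeasure_restrict.2 (by simp)
  have hIoo : IntegrableOn f (Ioo x₀ ℓ) := hf.integrable one_le_two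
  exact (intervalIntegrable_iff_integrableOn_Ioc_of_le hab).2
    ((hIoo.congr_set_ae Ioo_ae_eq_Ioc.symm).mono_set (Ioc_subset_Ioc ha hb))

theorem intervalIntegral_eq_setIntegral_Ioo_of_ae_eq {E : Type*} [NormedAddCommGroup E]
    [NormedSpace ℝ E] {f g : ℝ → E} {x₀ ℓ a b : ℝ}
    (hfg : f =ᵐ[volume.restrict (Ioo x₀ ℓ)] g) (ha : x₀ ≤ a) (hab : a ≤ b) (hb : b ≤ ℓ) :
    ∫ t in a..b, f t = ∫ t in Ioo a b, g t := by
  rw [integral_of_le hab, integral_Ioc_eq_integral_Ioo]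
  exact integral_congr_ae (ae_restrict_of_ae_restrict_of_subset (Ioo_subset_Ioo ha hb) hfg)

theorem intervalIntegral_inv_smul_eq_setIntegral_Ioo {x₀ ℓ : ℝ} (h : x₀ ≤ ℓ) {α : ℝ → ℝ}
    {F G : ℝ → ℂ} (hFG : ∀ s ∈ Ioo x₀ ℓ, F s = G s) :
    ∫ y in x₀..ℓ, (α y)⁻¹ • F y = ∫ s in Ioo x₀ ℓ, (α s : ℂ)⁻¹ * G s := by
  rw [integral_of_le h, integral_Ioc_eq_integral_Ioo]
  refine setIntegral_congr_fun measurableSet_Ioo fun s hs => ?_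
  rw [hFG s hs, Complex.real_smul, Complex.ofReal_inv]

theorem intervalIntegrable_rpow_inv {μ : ℝ} (hμ : μ < 1) :
    IntervalIntegrable (fun y : ℝ => (y ^ μ)⁻¹) volume 0 1 :=
  (intervalIntegrable_rpow' (r := -μ) (by linarith)).congr fun y hy =>
    Real.rpow_neg (uIoc_of_le (zero_le_one (α := ℝ)) ▸ hy).1.le μ

theorem integral_rpow_inv {μ : ℝ} (hμ : μ < 1) : ∫ y in (0 : ℝ)..1, (y ^ μ)⁻¹ = (1 - μ)⁻¹ := by
  rw [integral_congr (g := fun y : ℝ => y ^ (-μ)) fun y hy => ?_,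
    integral_rpow (Or.inl (by linarith))]
  · rw [Real.one_rpow, Real.zero_rpow (by linarith)]
    ring
  · exact (Real.rpow_neg (uIcc_of_le (zero_le_one (α := ℝ)) ▸ hy).1 μ).symm

theorem intervalIntegrable_one_add_rpow_inv {μ : ℝ} (hμ : μ < 1) :
    IntervalIntegrable (fun y : ℝ => ((1 + y) ^ μ)⁻¹) volume (-1) 0 := by
  simpa using (intervalIntegrable_rpow_inv hμ).comp_add_left 1

theorem integral_one_add_rpow_inv {μ : ℝ} (hμ : μ < 1) :
    ∫ y in (-1 : ℝ)..0, ((1 + y) ^ μ)⁻¹ = (1 - μ)⁻¹ := by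
  have h := integral_comp_add_left (fun y : ℝ => (y ^ μ)⁻¹) (a := -1) (b := 0) 1
  norm_num at h
  rw [h, integral_rpow_inv hμ]

theorem MemV1C.sub_eq_of_smul_deriv_eq {x₀ ℓ : ℝ} {α : ℝ → ℝ} {u u' F : ℝ → ℂ} {T L : ℂ}
    (hu : MemV1C x₀ ℓ α u u') (hxℓ : x₀ < ℓ) (hα : ∀ y ∈ Ioc x₀ ℓ, α y ≠ 0)
    (hαi : IntervalIntegrable (fun y => (α y)⁻¹) volume x₀ ℓ) (hF : ContinuousOn F (Icc x₀ ℓ))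
    (hflux : ∀ y ∈ Ioc x₀ ℓ, α y • u' y = T + F y) (hlim : Tendsto u (𝓝[>] x₀) (𝓝 L)) :
    u ℓ - L = (∫ y in x₀..ℓ, (α y)⁻¹) • T + ∫ y in x₀..ℓ, (α y)⁻¹ • F y := by
  have hsmul {G : ℝ → ℂ} (hG : ContinuousOn G (Icc x₀ ℓ)) :
      IntervalIntegrable (fun y => (α y)⁻¹ • G y) volume x₀ ℓ := by
    rw [intervalIntegrable_iff_integrableOn_Icc_of_le hxℓ.le] at hαi ⊢
    exact hαi.smul_continuousOn hG isCompact_Icc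
  have hu' : EqOn (fun y => (α y)⁻¹ • (T + F y)) u' (uIoc x₀ ℓ) := fun y hy => by
    rw [uIoc_of_le hxℓ.le] at hy
    simp only [← hflux y hy, inv_smul_smul₀ (hα y hy)]
  calc u ℓ - L = ∫ y in x₀..ℓ, u' y :=
        sub_eq_intervalIntegral_of_tendsto hxℓ ((hsmul (continuousOn_const.add hF)).congr hu')
          (fun x hx => (hu.2.1 x ℓ hx.1 hx.2.le le_rfl).2) hlim
    _ = ∫ y in x₀..ℓ, (α y)⁻¹ • (T + F y) :=
        (integral_congr_ae (ae_of_all _ fun y hy => hu' hy)).symm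
    _ = _ := by
      simp_rw [smul_add]
      rw [integral_add (hsmul continuousOn_const) (hsmul hF), intervalIntegral.integral_smul_const]

namespace MemV2C

variable {x₀ ℓ : ℝ} {α : ℝ → ℝ} {u u' g' : ℝ → ℂ}

theorem smul_deriv_eq_of_tendsto (hu : MemV2C x₀ ℓ α u u' g') {T : ℂ}
    (hT : Tendsto (fun x => α x • u' x) (𝓝[>] x₀) (𝓝 T)) {y : ℝ} (hy : y ∈ Ioc x₀ ℓ) :
    α y • u' y = T + ∫ t in x₀..y, g' t := by
  rw [← sub_eq_intervalIntegral_of_tendsto hy.1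
    (intervalIntegrable_of_memLp_two hu.2.2.1 le_rfl hy.1.le hy.2)
    (fun x hx => (hu.2.2.2 x y hx.1 hx.2.le hy.2).2) hT, add_sub_cancel]

theorem smul_deriv_eq (hu : MemV2C x₀ ℓ α u u' g') {y : ℝ} (hy : y ∈ Ioc x₀ ℓ) :
    α y • u' y = α ℓ • u' ℓ + ∫ t in ℓ..y, g' t := by
  rw [integral_symm, ← (hu.2.2.2 y ℓ hy.1 hy.2 le_rfl).2, ← sub_eq_add_neg, sub_sub_cancel]

theorem continuousOn_primitive (hu : MemV2C x₀ ℓ α u u' g') (h : x₀ ≤ ℓ) {c : ℝ}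
    (hc : c ∈ Icc x₀ ℓ) : ContinuousOn (fun y => ∫ t in c..y, g' t) (Icc x₀ ℓ) := by
  rw [← uIcc_of_le h] at hc ⊢
  exact continuousOn_primitive_interval'
    (intervalIntegrable_of_memLp_two hu.2.2.1 le_rfl h le_rfl) hc

theorem sub_eq_of_tendsto_smul_deriv (hu : MemV2C x₀ ℓ α u u' g') (hxℓ : x₀ < ℓ)
    (hα : ∀ y ∈ Ioc x₀ ℓ, α y ≠ 0) (hαi : IntervalIntegrable (fun y => (α y)⁻¹) volume x₀ ℓ)
    {T : ℂ} (hT : Tendsto (fun x => α x • u' x) (𝓝[>] x₀) (𝓝 T))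
    {L : ℂ} (hlim : Tendsto u (𝓝[>] x₀) (𝓝 L)) :
    u ℓ - L = (∫ y in x₀..ℓ, (α y)⁻¹) • T + ∫ y in x₀..ℓ, (α y)⁻¹ • ∫ t in x₀..y, g' t :=
  hu.1.sub_eq_of_smul_deriv_eq hxℓ hα hαi
    (hu.continuousOn_primitive hxℓ.le (left_mem_Icc.2 hxℓ.le))
    (fun _ hy => hu.smul_deriv_eq_of_tendsto hT hy) hlim

theorem sub_eq_of_tendsto (hu : MemV2C x₀ ℓ α u u' g') (hxℓ : x₀ < ℓ)
    (hα : ∀ y ∈ Ioc x₀ ℓ, α y ≠ 0) (hαi : IntervalIntegrable (fun y => (α y)⁻¹) volume x₀ ℓ)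
    {L : ℂ} (hlim : Tendsto u (𝓝[>] x₀) (𝓝 L)) :
    u ℓ - L = (∫ y in x₀..ℓ, (α y)⁻¹) • (α ℓ • u' ℓ) + ∫ y in x₀..ℓ, (α y)⁻¹ • ∫ t in ℓ..y, g' t :=
  hu.1.sub_eq_of_smul_deriv_eq hxℓ hα hαi
    (hu.continuousOn_primitive hxℓ.le (right_mem_Icc.2 hxℓ.le))
    (fun _ hy => hu.smul_deriv_eq hy) hlim

end MemV2C

theorem transmission_value_general (γ μa μb : ℝ) (hγ : 0 < γ)
    (hμa1 : μa < 1) (hμb1 : μb < 1)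
    (f g : ℝ → ℂ) (c : ℂ)
    (u u' gu w w' gw : ℝ → ℂ)
    (hu : MemV2C 0 1 (fun x => x ^ μa) u u' gu)
    (hw : MemV2C (-1) 0 (fun x => (1 + x) ^ μb) w w' gw)
    (hgu : gu =ᵐ[volume.restrict (Ioo (0 : ℝ) 1)] f)
    (hgw : gw =ᵐ[volume.restrict (Ioo (-1 : ℝ) 0)] g)
    (hwm1 : Tendsto w (𝓝[>] (-1 : ℝ)) (𝓝 0))
    (huw : Tendsto u (𝓝[>] (0 : ℝ)) (𝓝 (w 0)))
    (htrans : Tendsto (fun x : ℝ => (x ^ μa : ℝ) • u' x) (𝓝[>] (0 : ℝ))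
      (𝓝 ((((1 : ℝ) + 0) ^ μb : ℝ) • w' 0)))
    (hbc : (γ : ℂ) * u 1 + u' 1 = c) :
    (((1 : ℝ) + 0) ^ μb : ℝ) • w' 0 =
      (((1 + γ / (1 - μa) + γ / (1 - μb) : ℝ)) : ℂ)⁻¹ *
        (c - (∫ r in Ioo (0 : ℝ) 1, f r)
          - (γ : ℂ) * (∫ s in Ioo (0 : ℝ) 1, ((s ^ μa : ℝ) : ℂ)⁻¹ * ∫ r in Ioo (0 : ℝ) s, f r)
          + (γ : ℂ) * (∫ s in Ioo (-1 : ℝ) 0, (((1 + s) ^ μb : ℝ) : ℂ)⁻¹ *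
              ∫ r in Ioo s (0 : ℝ), g r)) := by
  set T : ℂ := (((1 : ℝ) + 0) ^ μb : ℝ) • w' 0
  have hu1 : u 1 - w 0 = (1 - μa)⁻¹ • T +
      ∫ s in Ioo (0 : ℝ) 1, ((s ^ μa : ℝ) : ℂ)⁻¹ * ∫ r in Ioo (0 : ℝ) s, f r := by
    rw [← integral_rpow_inv hμa1, ← intervalIntegral_inv_smul_eq_setIntegral_Ioo zero_le_one
      fun s hs => intervalIntegral_eq_setIntegral_Ioo_of_ae_eq hgu le_rfl hs.1.le hs.2.le]
    exact hu.sub_eq_of_tendsto_smul_deriv one_pos (fun y hy => (Real.rpow_pos_of_pos hy.1 _).ne')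
      (intervalIntegrable_rpow_inv hμa1) htrans huw
  have hw0 : w 0 - 0 = (1 - μb)⁻¹ • T +
      ∫ s in Ioo (-1 : ℝ) 0, (((1 + s) ^ μb : ℝ) : ℂ)⁻¹ * -∫ r in Ioo s (0 : ℝ), g r := by
    rw [← integral_one_add_rpow_inv hμb1, ← intervalIntegral_inv_smul_eq_setIntegral_Ioo
      (F := fun s => ∫ t in (0 : ℝ)..s, gw t) (by norm_num) fun s hs => by
        rw [integral_symm, intervalIntegral_eq_setIntegral_Ioo_of_ae_eq hgw hs.1.le hs.2.le le_rfl]]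
    exact hw.sub_eq_of_tendsto (by norm_num)
      (fun y hy => (Real.rpow_pos_of_pos (by linarith [hy.1]) _).ne')
      (intervalIntegrable_one_add_rpow_inv hμb1) hwm1
  have hu'1 : u' 1 = T + ∫ r in Ioo (0 : ℝ) 1, f r := by
    simpa only [intervalIntegral_eq_setIntegral_Ioo_of_ae_eq hgu le_rfl zero_le_one le_rfl,
      Real.one_rpow, one_smul] using
      hu.smul_deriv_eq_of_tendsto htrans (right_mem_Ioc.2 one_pos)
  have hD : (0 : ℝ) < 1 + γ / (1 - μa) + γ / (1 - μb) := by
    linarith [div_pos hγ (sub_pos.2 hμa1), div_pos hγ (sub_pos.2 hμb1)]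
  rw [eq_inv_mul_iff_mul_eq₀ (by exact_mod_cast hD.ne')]
  simp only [mul_neg, MeasureTheory.integral_neg, Complex.real_smul, sub_zero] at hu1 hw0
  push_cast at hu1 hw0 ⊢
  simp only [div_eq_mul_inv]
  linear_combination hbc - γ * hu1 - γ * hw0 - hu'1

/-- With `a(x) = x^{μ_a}`, `b(x) = (1+x)^{μ_b}`, `0 ≤ μ_a < 1`,
`0 ≤ μ_b < 1`: if `u ∈ V²_a(0,1)` and `w ∈ V²_b(-1,0)` satisfy `(a u')' = f` a.e. on `(0,1)`
with `f ∈ L²(0,1)`, `(b w')' = g` a.e. on `(-1,0)` with `g ∈ L²(-1,0)`, `w(-1) = 0`,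
`u(0) = w(0)`, `lim_{x→0⁺}(a u')(x) = (b w')(0)` and `γ u(1) + u'(1) = c`, then
`(b w')(0) = (1 + γ/(1-μ_a) + γ/(1-μ_b))⁻¹ · (c - ∫₀¹ f(r) dr
  - γ ∫₀¹ a(s)⁻¹ (∫₀^s f(r) dr) ds + γ ∫_{-1}^0 b(s)⁻¹ (∫_s^0 g(r) dr) ds)`. -/
theorem transmission_value (γ μa μb : ℝ) (hγ : 0 < γ)
    (hμa0 : 0 ≤ μa) (hμa1 : μa < 1) (hμb0 : 0 ≤ μb) (hμb1 : μb < 1)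
    (f g : ℝ → ℂ) (c : ℂ)
    (hf : MemLp f 2 (volume.restrict (Ioo (0 : ℝ) 1)))
    (hg : MemLp g 2 (volume.restrict (Ioo (-1 : ℝ) 0)))
    (u u' gu w w' gw : ℝ → ℂ)
    (hu : MemV2C 0 1 (fun x => x ^ μa) u u' gu)
    (hw : MemV2C (-1) 0 (fun x => (1 + x) ^ μb) w w' gw)
    (hgu : gu =ᵐ[volume.restrict (Ioo (0 : ℝ) 1)] f)
    (hgw : gw =ᵐ[volume.restrict (Ioo (-1 : ℝ) 0)] g)
    (hwm1 : Tendsto w (𝓝[>] (-1 : ℝ)) (𝓝 0))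
    (huw : Tendsto u (𝓝[>] (0 : ℝ)) (𝓝 (w 0)))
    (htrans : Tendsto (fun x : ℝ => (x ^ μa : ℝ) • u' x) (𝓝[>] (0 : ℝ))
      (𝓝 ((((1 : ℝ) + 0) ^ μb : ℝ) • w' 0)))
    (hbc : (γ : ℂ) * u 1 + u' 1 = c) :
    (((1 : ℝ) + 0) ^ μb : ℝ) • w' 0 =
      (((1 + γ / (1 - μa) + γ / (1 - μb) : ℝ)) : ℂ)⁻¹ *
        (c - (∫ r in Ioo (0 : ℝ) 1, f r)
          - (γ : ℂ) * (∫ s in Ioo (0 : ℝ) 1, ((s ^ μa : ℝ) : ℂ)⁻¹ * ∫ r in Ioo (0 : ℝ) s, f r)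
          + (γ : ℂ) * (∫ s in Ioo (-1 : ℝ) 0, (((1 + s) ^ μb : ℝ) : ℂ)⁻¹ *
              ∫ r in Ioo s (0 : ℝ), g r)) :=
  transmission_value_general γ μa μb hγ hμa1 hμb1 f g c u u' gu w w' gw hu hw hgu hgw hwm1 huw
    htrans hbc
end

section
/- Let 0 ≤ μ < 2, a(x) = x^μ on (0,1], and let u ∈ V²_a(0,1) be complex-valued. Then for every ξ ∈ (0, 1/2] there exists ζ ∈ [ξ, 2ξ] such that |(a u')(ζ)| ≤ ((2^{μ+1} − 1)/(μ + 1))^{1/2} · ξ^{(μ−1)/2} · (∫₀¹ x^μ |u'(x)|² dx)^{1/2}. -/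
open MeasureTheory Set Filter Topology

/-!
Write `g = a u'`, which is continuous on `[ξ, 2ξ]` because it is absolutely continuous there. At a
minimum point `ζ` of `‖g‖` on `[ξ, 2ξ]` we have `ξ ‖g ζ‖ ≤ ∫_ξ^{2ξ} ‖g‖ = ∫_ξ^{2ξ} √a · ‖√a u'‖`,
and Cauchy–Schwarz bounds this by `(∫_ξ^{2ξ} x^μ)^{1/2} (∫_0^1 x^μ ‖u'‖²)^{1/2}`, where
`∫_ξ^{2ξ} x^μ = ξ^{μ+1} (2^{μ+1} - 1)/(μ + 1)`.
-/

lemma continuousOn_Icc_of_sub_eq_integral {E : Type*} [NormedAddCommGroup E] [NormedSpace ℝ E]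
    [CompleteSpace E] {g g' : ℝ → E} {a b : ℝ}
    (hg' : IntervalIntegrable g' volume a b)
    (hg : ∀ x ∈ Icc a b, g x - g a = ∫ t in a..x, g' t) : ContinuousOn g (Icc a b) := by
  have hprim : ContinuousOn (fun x => g a + ∫ t in a..x, g' t) (Icc a b) :=
    continuousOn_const.add
      ((intervalIntegral.continuousOn_primitive_interval' hg' left_mem_uIcc).mono Icc_subset_uIcc)
  exact hprim.congr fun x hx => by simp only [← hg x hx, add_sub_cancel]

lemma exists_mem_Icc_norm_mul_le_setIntegral {E : Type*} [NormedAddCommGroup E] {g : ℝ → E}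
    {a b : ℝ} (hab : a ≤ b) (hg : ContinuousOn g (Icc a b)) :
    ∃ ζ ∈ Icc a b, ‖g ζ‖ * (b - a) ≤ ∫ x in Ioo a b, ‖g x‖ := by
  obtain ⟨ζ, hζ, hmin⟩ := isCompact_Icc.exists_isMinOn (nonempty_Icc.2 hab) hg.norm
  refine ⟨ζ, hζ, ?_⟩
  have hconst : ∫ _ in Ioo a b, ‖g ζ‖ = ‖g ζ‖ * (b - a) := by
    rw [setIntegral_const, measureReal_def, Real.volume_Ioo,
      ENNReal.toReal_ofReal (sub_nonneg.2 hab), smul_eq_mul, mul_comm]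
  rw [← hconst]
  exact setIntegral_mono_on (integrableOn_const measure_Ioo_lt_top.ne)
    (hg.norm.integrableOn_Icc.mono_set Ioo_subset_Icc_self) measurableSet_Ioo
    fun x hx => hmin (Ioo_subset_Icc_self hx)

section

variable {α : Type*} [MeasurableSpace α] {ν : Measure α}

lemma integral_mul_le_sqrt_mul_sqrt_of_nonneg {f h : α → ℝ} (hf0 : 0 ≤ᵐ[ν] f) (hh0 : 0 ≤ᵐ[ν] h)
    (hf : MemLp f 2 ν) (hh : MemLp h 2 ν) :
    ∫ x, f x * h x ∂ν ≤ √(∫ x, f x ^ 2 ∂ν) * √(∫ x, h x ^ 2 ∂ν) := by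
  have hE : ENNReal.ofReal 2 = 2 := by norm_num
  have := integral_mul_le_Lp_mul_Lq_of_nonneg Real.HolderConjugate.two_two hf0 hh0
    (hE ▸ hf) (hE ▸ hh)
  simpa only [Real.rpow_two, ← Real.sqrt_eq_rpow] using this

variable {E : Type*} [NormedAddCommGroup E] [NormedSpace ℝ E]

lemma norm_sqrt_smul_sq {w : ℝ} (hw : 0 ≤ w) (v : E) : ‖√w • v‖ ^ 2 = w * ‖v‖ ^ 2 := by
  rw [norm_smul, mul_pow, Real.norm_of_nonneg (Real.sqrt_nonneg w), Real.sq_sqrt hw]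

lemma norm_smul_eq_sqrt_mul_norm_sqrt_smul {w : ℝ} (hw : 0 ≤ w) (v : E) :
    ‖w • v‖ = √w * ‖√w • v‖ := by
  rw [norm_smul, norm_smul, Real.norm_of_nonneg hw, Real.norm_of_nonneg (Real.sqrt_nonneg w),
    ← mul_assoc, Real.mul_self_sqrt hw]

lemma integrable_mul_norm_sq_of_memLp_sqrt_smul {w : α → ℝ} {v : α → E} (hw : 0 ≤ᵐ[ν] w)
    (hv : MemLp (fun x => √(w x) • v x) 2 ν) : Integrable (fun x => w x * ‖v x‖ ^ 2) ν :=
  hv.norm.integrable_sq.congr (hw.mono fun x hx => norm_sqrt_smul_sq hx (v x))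

lemma integral_norm_smul_le_sqrt_mul_sqrt {w : α → ℝ} {v : α → E} (hw : 0 ≤ᵐ[ν] w)
    (hw2 : MemLp (fun x => √(w x)) 2 ν) (hv : MemLp (fun x => √(w x) • v x) 2 ν) :
    ∫ x, ‖w x • v x‖ ∂ν ≤ √(∫ x, w x ∂ν) * √(∫ x, w x * ‖v x‖ ^ 2 ∂ν) := by
  have hsplit : ∫ x, ‖w x • v x‖ ∂ν = ∫ x, √(w x) * ‖√(w x) • v x‖ ∂ν :=
    integral_congr_ae (hw.mono fun x hx => norm_smul_eq_sqrt_mul_norm_sqrt_smul hx (v x))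
  have hw_sq : ∫ x, √(w x) ^ 2 ∂ν = ∫ x, w x ∂ν :=
    integral_congr_ae (hw.mono fun x hx => Real.sq_sqrt hx)
  have hv_sq : ∫ x, ‖√(w x) • v x‖ ^ 2 ∂ν = ∫ x, w x * ‖v x‖ ^ 2 ∂ν :=
    integral_congr_ae (hw.mono fun x hx => norm_sqrt_smul_sq hx (v x))
  rw [hsplit, ← hw_sq, ← hv_sq]
  exact integral_mul_le_sqrt_mul_sqrt_of_nonneg (Eventually.of_forall fun x => Real.sqrt_nonneg _)
    (Eventually.of_forall fun x => norm_nonneg _) hw2 hv.norm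

end

lemma setIntegral_rpow_Ioo_two_mul {μ ξ : ℝ} (hμ : -1 < μ) (hξ : 0 ≤ ξ) :
    ∫ x in Ioo ξ (2 * ξ), x ^ μ = ξ ^ (μ + 1) * ((2 ^ (μ + 1) - 1) / (μ + 1)) := by
  rw [← integral_Ioc_eq_integral_Ioo, ← intervalIntegral.integral_of_le (by linarith),
    integral_rpow (Or.inl hμ), Real.mul_rpow zero_le_two hξ]
  ring

lemma exists_mem_Icc_norm_smul_mul_le {E : Type*} [NormedAddCommGroup E] [NormedSpace ℝ E]
    {w : ℝ → ℝ} {v : ℝ → E} {a b : ℝ} (hab : a ≤ b) (hw : ∀ x ∈ Ioo a b, 0 ≤ w x)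
    (hw2 : MemLp (fun x => √(w x)) 2 (volume.restrict (Ioo a b)))
    (hv : MemLp (fun x => √(w x) • v x) 2 (volume.restrict (Ioo a b)))
    (hcont : ContinuousOn (fun x => w x • v x) (Icc a b)) :
    ∃ ζ ∈ Icc a b, ‖w ζ • v ζ‖ * (b - a) ≤
      √(∫ x in Ioo a b, w x) * √(∫ x in Ioo a b, w x * ‖v x‖ ^ 2) := by
  obtain ⟨ζ, hζ, hle⟩ := exists_mem_Icc_norm_mul_le_setIntegral hab hcont
  exact ⟨ζ, hζ, hle.trans <| integral_norm_smul_le_sqrt_mul_sqrt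
    ((ae_restrict_iff' measurableSet_Ioo).2 (ae_of_all _ hw)) hw2 hv⟩

lemma sqrt_rpow_add_one {ξ : ℝ} (hξ : 0 < ξ) (μ : ℝ) :
    √(ξ ^ (μ + 1)) = ξ ^ ((μ - 1) / 2) * ξ := by
  rw [Real.sqrt_eq_rpow, ← Real.rpow_mul hξ.le, ← Real.rpow_add_one hξ.ne']
  ring_nf

lemma exists_mem_Icc_norm_rpow_smul_le {E : Type*} [NormedAddCommGroup E] [NormedSpace ℝ E]
    {μ ξ : ℝ} {v : ℝ → E} (hμ : 0 ≤ μ) (hξ : 0 < ξ)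
    (hv : MemLp (fun x => √(x ^ μ) • v x) 2 (volume.restrict (Ioo ξ (2 * ξ))))
    (hcont : ContinuousOn (fun x => x ^ μ • v x) (Icc ξ (2 * ξ))) :
    ∃ ζ ∈ Icc ξ (2 * ξ), ‖ζ ^ μ • v ζ‖ ≤ √((2 ^ (μ + 1) - 1) / (μ + 1)) * ξ ^ ((μ - 1) / 2) *
      √(∫ x in Ioo ξ (2 * ξ), x ^ μ * ‖v x‖ ^ 2) := by
  have hw : ∀ x ∈ Ioo ξ (2 * ξ), 0 ≤ x ^ μ := fun x hx => Real.rpow_nonneg (hξ.trans hx.1).le μ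
  have hw2 : MemLp (fun x : ℝ => √(x ^ μ)) 2 (volume.restrict (Ioo ξ (2 * ξ))) :=
    (MonotoneOn.memLp_isCompact isCompact_Icc fun x hx y _ hxy =>
      Real.sqrt_le_sqrt (Real.rpow_le_rpow (hξ.le.trans hx.1) hxy hμ)).mono_measure
      (Measure.restrict_mono Ioo_subset_Icc_self le_rfl)
  obtain ⟨ζ, hζ, hle⟩ := exists_mem_Icc_norm_smul_mul_le (by linarith) hw hw2 hv hcont
  have hC : 0 ≤ ((2 : ℝ) ^ (μ + 1) - 1) / (μ + 1) :=
    div_nonneg (sub_nonneg.2 (Real.one_le_rpow one_le_two (by linarith))) (by linarith)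
  rw [setIntegral_rpow_Ioo_two_mul (by linarith) hξ.le, Real.sqrt_mul' _ hC,
    sqrt_rpow_add_one hξ, show 2 * ξ - ξ = ξ by ring] at hle
  refine ⟨ζ, hζ, le_of_mul_le_mul_right ?_ hξ⟩
  linarith

theorem min_point_estimate_general (μ : ℝ) (hμ0 : 0 ≤ μ)
    (u u' g' : ℝ → ℂ) (hu : MemV2C 0 1 (fun x => x ^ μ) u u' g') :
    ∀ ξ : ℝ, 0 < ξ → ξ ≤ 1 / 2 → ∃ ζ ∈ Icc ξ (2 * ξ),
      ‖((ζ ^ μ : ℝ) : ℂ) * u' ζ‖ ≤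
        Real.sqrt (((2 : ℝ) ^ (μ + 1) - 1) / (μ + 1)) * ξ ^ ((μ - 1) / 2) *
          Real.sqrt (∫ x in Ioo (0 : ℝ) 1, x ^ μ * ‖u' x‖ ^ 2) := by
  obtain ⟨⟨-, -, hsqrt⟩, -, -, hFTC⟩ := hu
  intro ξ hξ hξ2
  have hsub : Ioo ξ (2 * ξ) ⊆ Ioo 0 1 := Ioo_subset_Ioo hξ.le (by linarith)
  have hcont : ContinuousOn (fun x : ℝ => x ^ μ • u' x) (Icc ξ (2 * ξ)) :=
    continuousOn_Icc_of_sub_eq_integral (hFTC ξ (2 * ξ) hξ (by linarith) (by linarith)).1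
      fun x hx => (hFTC ξ x hξ hx.1 (by linarith [hx.2])).2
  obtain ⟨ζ, hζ, hle⟩ := exists_mem_Icc_norm_rpow_smul_le hμ0 hξ
    (hsqrt.mono_measure (Measure.restrict_mono hsub le_rfl)) hcont
  have hw : ∀ᵐ x ∂volume.restrict (Ioo (0 : ℝ) 1), 0 ≤ x ^ μ :=
    (ae_restrict_iff' measurableSet_Ioo).2 (ae_of_all _ fun x hx => Real.rpow_nonneg hx.1.le μ)
  have hB : ∫ x in Ioo ξ (2 * ξ), x ^ μ * ‖u' x‖ ^ 2 ≤ ∫ x in Ioo 0 1, x ^ μ * ‖u' x‖ ^ 2 :=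
    setIntegral_mono_set (integrable_mul_norm_sq_of_memLp_sqrt_smul hw hsqrt)
      (hw.mono fun x hx => mul_nonneg hx (sq_nonneg _)) hsub.eventuallyLE
  refine ⟨ζ, hζ, ?_⟩
  rw [← Complex.real_smul]
  exact hle.trans (by gcongr)

/-- Let `0 ≤ μ < 2`, `a(x) = x^μ`, and let `u ∈ V²_a(0,1)` be
complex-valued. For every `ξ ∈ (0, 1/2]` there exists `ζ ∈ [ξ, 2ξ]` with
`|(a u')(ζ)| ≤ ((2^{μ+1} - 1)/(μ+1))^{1/2} · ξ^{(μ-1)/2} · (∫₀¹ x^μ |u'(x)|² dx)^{1/2}`. -/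
theorem min_point_estimate (μ : ℝ) (hμ0 : 0 ≤ μ) (hμ2 : μ < 2)
    (u u' g' : ℝ → ℂ) (hu : MemV2C 0 1 (fun x => x ^ μ) u u' g') :
    ∀ ξ : ℝ, 0 < ξ → ξ ≤ 1 / 2 → ∃ ζ ∈ Icc ξ (2 * ξ),
      ‖((ζ ^ μ : ℝ) : ℂ) * u' ζ‖ ≤
        Real.sqrt (((2 : ℝ) ^ (μ + 1) - 1) / (μ + 1)) * ξ ^ ((μ - 1) / 2) *
          Real.sqrt (∫ x in Ioo (0 : ℝ) 1, x ^ μ * ‖u' x‖ ^ 2) :=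
  min_point_estimate_general μ hμ0 u u' g' hu
end
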